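/- Let Γ be the subgroup of PSL₂(ℤ) generated by the images of the seven matrices B⁶, B⁻¹A³B, A³, B²A⁻¹B, BAB, AB², and B³A. Then the image of BAB³A⁻¹B⁻⁴ = [[205,-24],[504,-59]] in PSL₂(ℤ) lies in Γ̄(12) but does not lie in Γ; in particular Γ̄(12) is not contained in Γ. -/

import Mathlib

/-- `SL(2, ℤ)`. -/
abbrev SL2Z := Matrix.SpecialLinearGroup (Fin 2) ℤ

/-- `PSL₂(ℤ)`, the quotient of `SL(2, ℤ)` by its center `{±I}`. -/
abbrev PSL2Z := SL2Z ⧸ Subgroup.center SL2Z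

/-- The projection `SL(2, ℤ) → PSL₂(ℤ)`. -/
def projSL : SL2Z →* PSL2Z := QuotientGroup.mk' (Subgroup.center SL2Z)

/-- `Γ̄(N)`, the image of the principal congruence subgroup `Γ(N)` in `PSL₂(ℤ)`. -/
def GammaBar (N : ℕ) : Subgroup PSL2Z := (CongruenceSubgroup.Gamma N).map projSL

/-- The matrix `A = [[1,2],[0,1]]` in `SL(2, ℤ)`. -/
def matA : SL2Z := ⟨!![1, 2; 0, 1], by norm_num [Matrix.det_fin_two_of]⟩

/-- The matrix `B = [[1,0],[2,1]]` in `SL(2, ℤ)`. -/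
def matB : SL2Z := ⟨!![1, 0; 2, 1], by norm_num [Matrix.det_fin_two_of]⟩

/-- The matrix `T = [[1,1],[0,1]]` in `SL(2, ℤ)`. -/
def matT : SL2Z := ⟨!![1, 1; 0, 1], by norm_num [Matrix.det_fin_two_of]⟩

/-- The matrix `L = [[1,0],[1,1]]` in `SL(2, ℤ)`. -/
def matL : SL2Z := ⟨!![1, 0; 1, 1], by norm_num [Matrix.det_fin_two_of]⟩

/-- `Ā`, the image of `A` in `PSL₂(ℤ)`. -/
def Abar : PSL2Z := projSL matA

/-- `B̄`, the image of `B` in `PSL₂(ℤ)`. -/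
def Bbar : PSL2Z := projSL matB

/-!
Ā and B̄ act on the irrational reals by `x ↦ x + 2` and `1/x ↦ 1/x + 2`, so the ping-pong
lemma, played on `{|x| > 1}` and `{|x| < 1}`, shows that they generate a free subgroup of
`PSL₂(ℤ)`. A homomorphism out of it is therefore fixed by choosing images of Ā and B̄: sending
them to the permutations by which they act on the six edges of the paper's graph, all seven
generators of Γ fix edge `0` while `BAB³A⁻¹B⁻⁴` moves it, so `BAB³A⁻¹B⁻⁴ ∉ Γ`. On the other
hand `BAB³A⁻¹B⁻⁴ = [[205, -24], [504, -59]] ≡ I (mod 12)`.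
-/

theorem Irrational.abs_ne_one {x : ℝ} (hx : Irrational x) : |x| ≠ 1 := fun h => by
  rcases (abs_eq zero_le_one).1 h with h | h
  exacts [hx.ne_one h, hx.ne_int (-1) (by simp [h])]

theorem Irrational.ratCast_mul_add_ne_zero {x : ℝ} (hx : Irrational x) {c d : ℚ}
    (hcd : c ≠ 0 ∨ d ≠ 0) : (c * x + d : ℝ) ≠ 0 := by
  rcases eq_or_ne c 0 with rfl | hc
  · simpa using hcd
  · exact ((hx.ratCast_mul hc).add_ratCast d).ne_zero

theorem Irrational.linearFractional {x : ℝ} (hx : Irrational x) {a b c d : ℚ}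
    (hdet : a * d - b * c ≠ 0) : Irrational ((a * x + b) / (c * x + d)) := by
  have hden : (c * x + d : ℝ) ≠ 0 := hx.ratCast_mul_add_ne_zero (by
    by_contra! h; obtain ⟨rfl, rfl⟩ := h; simp at hdet)
  rintro ⟨q, hq⟩
  have hlin : ((a - q * c : ℚ) : ℝ) * x = (q * d - b : ℚ) := by
    push_cast; rw [eq_div_iff hden] at hq; linear_combination -hq
  rcases eq_or_ne (a - q * c) 0 with h | h
  · have hb : q * d - b = 0 := by
      rwa [h, Rat.cast_zero, zero_mul, eq_comm, Rat.cast_eq_zero] at hlin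
    exact hdet (by linear_combination d * h + c * hb)
  · refine hx ⟨(q * d - b) / (a - q * c), ?_⟩
    rw [Rat.cast_div, ← hlin, mul_div_cancel_left₀ _ (by exact_mod_cast h)]

universe u

theorem FreeGroup.injective_lift_of_translations {ι G : Type u} {α : Type*} [Nontrivial ι]
    [Group G] [MulAction G α] (g : ι → G) (f : ι → α → ℝ) (hf : ∀ i x, |f i x| ≠ 1)
    (hg : ∀ i x, f i (g i • x) = f i x + 2)
    (hdisj : Pairwise fun i j => ∀ x, 1 < |f i x| → |f j x| ≤ 1)
    (hne : ∀ i, ∃ x, 1 < f i x) : Function.Injective (FreeGroup.lift g) := by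
  set X : ι → Set α := fun i => {x | 1 < f i x}
  set Y : ι → Set α := fun i => {x | f i x < -1}
  have one_lt_abs : ∀ i x, x ∈ X i ∨ x ∈ Y i → 1 < |f i x| := by
    rintro i x (hx | hx)
    · exact lt_abs.2 (.inl hx)
    · exact lt_abs.2 (.inr (by simp only [Set.mem_ofPred_eq, Y] at hx; linarith))
  have disj :
      ∀ i j, i ≠ j → ∀ x, (x ∈ X i ∨ x ∈ Y i) → (x ∈ X j ∨ x ∈ Y j) → False :=
    fun i j hij x hi hj => (hdisj hij x (one_lt_abs i x hi)).not_gt (one_lt_abs j x hj)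
  refine FreeGroup.injective_lift_of_ping_pong g X Y hne ?_ ?_ ?_ ?_ ?_
  · exact fun i j hij => Set.disjoint_left.2 fun x hi hj => disj i j hij x (.inl hi) (.inl hj)
  · exact fun i j hij => Set.disjoint_left.2 fun x hi hj => disj i j hij x (.inr hi) (.inr hj)
  · intro i j
    refine Set.disjoint_left.2 fun x hi hj => ?_
    rcases eq_or_ne i j with rfl | hij
    · linarith [show 1 < f i x from hi, show f i x < -1 from hj]
    · exact disj i j hij x (.inl hi) (.inr hj)
  · rintro i _ ⟨x, hx, rfl⟩
    have : f i x ≠ -1 := fun h => hf i x (by simp [h])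
    simp only [Set.mem_compl_iff, Set.mem_ofPred_eq, not_lt, Y] at hx
    show 1 < f i (g i • x)
    rw [hg]
    linarith [lt_of_le_of_ne hx this.symm]
  · rintro i _ ⟨x, hx, rfl⟩
    have : f i x ≠ 1 := fun h => hf i x (by simp [h])
    simp only [Set.mem_compl_iff, Set.mem_ofPred_eq, not_lt, X] at hx
    have h := hg i ((g i)⁻¹ • x)
    rw [smul_inv_smul] at h
    show f i ((g i)⁻¹ • x) < -1
    linarith [lt_of_le_of_ne hx this]

theorem MonoidHom.apply_notMem_closure_image {F G H : Type*} [Group F] [Group G] [Group H]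
    {ψ : F →* G} (hψ : Function.Injective ψ) (φ : F →* H) {K : Subgroup H} {S : Set F}
    (hS : S ⊆ K.comap φ) {w : F} (hw : φ w ∉ K) : ψ w ∉ Subgroup.closure (ψ '' S) := by
  rw [← MonoidHom.map_closure]
  rintro ⟨v, hv, hvw⟩
  exact hw (hψ hvw ▸ (Subgroup.closure_le _).2 hS hv)

section Words

variable {G H : Type*} [Group G] [Group H]

def genusTwoGens (a b : G) : Set G :=
  {b ^ 6, b⁻¹ * a ^ 3 * b, a ^ 3, b ^ 2 * a⁻¹ * b, b * a * b, a * b ^ 2, b ^ 3 * a}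

def levelTwelveWord (a b : G) : G := b * a * b ^ 3 * a⁻¹ * b⁻¹ ^ 4

lemma image_genusTwoGens (f : G →* H) (a b : G) :
    f '' genusTwoGens a b = genusTwoGens (f a) (f b) := by
  simp only [genusTwoGens, Set.image_insert_eq, Set.image_singleton, map_mul, map_pow, map_inv]

lemma map_levelTwelveWord (f : G →* H) (a b : G) :
    f (levelTwelveWord a b) = levelTwelveWord (f a) (f b) := by
  simp only [levelTwelveWord, map_mul, map_pow, map_inv]

end Words

-- Irrational points avoid the poles of the Möbius action and the boundaries `±1` of the
-- ping-pong sets.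
abbrev Irrationals := {x : ℝ // Irrational x}

namespace Irrationals

lemma ratCast_det_ne_zero (M : SL2Z) : (M 0 0 : ℚ) * M 1 1 - M 0 1 * M 1 0 ≠ 0 := by
  have h : M 0 0 * M 1 1 - M 0 1 * M 1 0 = 1 := by rw [← Matrix.det_fin_two]; exact M.det_coe
  exact_mod_cast h ▸ one_ne_zero

lemma den_ne_zero (M : SL2Z) (x : Irrationals) : (M 1 0 * x + M 1 1 : ℝ) ≠ 0 := by
  have := x.2.ratCast_mul_add_ne_zero (c := M 1 0) (d := M 1 1) (by
    by_contra! h; have := ratCast_det_ne_zero M; simp_all)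
  simpa using this

noncomputable def mobius (M : SL2Z) (x : Irrationals) : Irrationals :=
  ⟨(M 0 0 * x + M 0 1) / (M 1 0 * x + M 1 1), by
    simpa using x.2.linearFractional (ratCast_det_ne_zero M)⟩

lemma coe_mobius (M : SL2Z) (x : Irrationals) :
    (mobius M x : ℝ) = (M 0 0 * x + M 0 1) / (M 1 0 * x + M 1 1) := rfl

noncomputable instance : MulAction SL2Z Irrationals where
  smul := mobius
  one_smul x := Subtype.ext <| by
    show (mobius 1 x : ℝ) = x
    simp [coe_mobius]
  mul_smul M N x := Subtype.ext <| by
    show (mobius (M * N) x : ℝ) = mobius M (mobius N x)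
    have h := den_ne_zero N x
    rw [coe_mobius, coe_mobius, coe_mobius, ← div_div_div_cancel_right₀ h]
    simp only [Matrix.SpecialLinearGroup.coe_mul, Matrix.mul_apply, Fin.sum_univ_two]
    push_cast
    congr 1 <;> field_simp <;> ring

lemma coe_smul (M : SL2Z) (x : Irrationals) :
    ((M • x : Irrationals) : ℝ) = (M 0 0 * x + M 0 1) / (M 1 0 * x + M 1 1) := rfl

lemma smul_eq_self_of_mem_center {M : SL2Z} (hM : M ∈ Subgroup.center SL2Z) (x : Irrationals) :
    M • x = x := by
  obtain ⟨r, hr, hM⟩ := Matrix.SpecialLinearGroup.mem_center_iff.mp hM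
  have hr0 : (r : ℝ) ≠ 0 := by rintro h; simp_all
  ext
  rw [coe_smul, ← hM]
  simp [Matrix.intCast_apply, field]

noncomputable def toPSLPerm : PSL2Z →* Equiv.Perm Irrationals :=
  QuotientGroup.lift _ (MulAction.toPermHom SL2Z Irrationals) fun _ hM =>
    Equiv.ext (smul_eq_self_of_mem_center hM)

noncomputable instance : MulAction PSL2Z Irrationals := MulAction.compHom _ toPSLPerm

lemma projSL_smul (M : SL2Z) (x : Irrationals) : projSL M • x = M • x := rfl

lemma coe_Abar_smul (x : Irrationals) : ((Abar • x : Irrationals) : ℝ) = x + 2 := by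
  rw [Abar, projSL_smul, coe_smul]
  simp [matA]

lemma inv_coe_Bbar_smul (x : Irrationals) :
    ((Bbar • x : Irrationals) : ℝ)⁻¹ = (x : ℝ)⁻¹ + 2 := by
  rw [Bbar, projSL_smul, coe_smul, inv_div]
  simp [matB, add_div, x.2.ne_zero, add_comm]

end Irrationals

theorem injective_lift_Abar_Bbar : Function.Injective (FreeGroup.lift ![Abar, Bbar]) := by
  refine FreeGroup.injective_lift_of_translations _
    ![fun x : Irrationals => (x : ℝ), fun x => (x : ℝ)⁻¹] ?_ ?_ ?_ ?_
  · intro i x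
    fin_cases i
    exacts [x.2.abs_ne_one, x.2.inv.abs_ne_one]
  · intro i x
    fin_cases i
    exacts [Irrationals.coe_Abar_smul x, Irrationals.inv_coe_Bbar_smul x]
  · intro i j hij x
    fin_cases i <;> fin_cases j
    · exact absurd rfl hij
    · simpa using fun h : 1 < |(x : ℝ)| => inv_le_one_of_one_le₀ h.le
    · simpa using fun h : 1 < |(x : ℝ)|⁻¹ =>
        inv_inv |(x : ℝ)| ▸ inv_le_one_of_one_le₀ h.le
    · exact absurd rfl hij
  · intro i
    fin_cases i
    · exact ⟨⟨√2, irrational_sqrt_two⟩, Real.one_lt_sqrt_two⟩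
    · exact ⟨⟨(√2)⁻¹, irrational_sqrt_two.inv⟩, by simpa using Real.one_lt_sqrt_two⟩

def edgePermA : Equiv.Perm (Fin 6) :=
  ⟨![1, 2, 0, 4, 5, 3], ![2, 0, 1, 5, 3, 4], by decide, by decide⟩

def edgePermB : Equiv.Perm (Fin 6) :=
  ⟨![3, 5, 1, 2, 0, 4], ![4, 2, 3, 0, 5, 1], by decide, by decide⟩

lemma genusTwoGens_subset_stabilizer :
    genusTwoGens edgePermA edgePermB ⊆ MulAction.stabilizer (Equiv.Perm (Fin 6)) (0 : Fin 6) := by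
  simp only [genusTwoGens, Set.insert_subset_iff, Set.singleton_subset_iff, SetLike.mem_coe,
    MulAction.mem_stabilizer_iff]
  decide

lemma levelTwelveWord_notMem_stabilizer :
    levelTwelveWord edgePermA edgePermB ∉
      MulAction.stabilizer (Equiv.Perm (Fin 6)) (0 : Fin 6) := by
  rw [MulAction.mem_stabilizer_iff]
  decide

theorem levelTwelveWord_notMem_closure_genusTwoGens :
    levelTwelveWord Abar Bbar ∉ Subgroup.closure (genusTwoGens Abar Bbar) := by
  have hA : FreeGroup.lift ![Abar, Bbar] (.of 0) = Abar := FreeGroup.lift_apply_of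
  have hB : FreeGroup.lift ![Abar, Bbar] (.of 1) = Bbar := FreeGroup.lift_apply_of
  set a : FreeGroup (Fin 2) := .of 0
  set b : FreeGroup (Fin 2) := .of 1
  set φ := FreeGroup.lift ![edgePermA, edgePermB]
  have hφS : genusTwoGens a b ⊆ (MulAction.stabilizer _ (0 : Fin 6)).comap φ := by
    rw [Subgroup.coe_comap, ← Set.image_subset_iff, image_genusTwoGens]
    exact genusTwoGens_subset_stabilizer
  have hφw : φ (levelTwelveWord a b) ∉ MulAction.stabilizer _ (0 : Fin 6) := by
    rw [map_levelTwelveWord]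
    exact levelTwelveWord_notMem_stabilizer
  have := MonoidHom.apply_notMem_closure_image injective_lift_Abar_Bbar φ hφS hφw
  rwa [image_genusTwoGens, map_levelTwelveWord, hA, hB] at this

lemma coe_levelTwelveWord_matA_matB :
    ((levelTwelveWord matA matB : SL2Z) : Matrix (Fin 2) (Fin 2) ℤ) = !![205, -24; 504, -59] := by
  have hA : (matA : Matrix (Fin 2) (Fin 2) ℤ) = !![1, 2; 0, 1] := rfl
  have hB : (matB : Matrix (Fin 2) (Fin 2) ℤ) = !![1, 0; 2, 1] := rfl
  simp only [levelTwelveWord, Matrix.SpecialLinearGroup.coe_mul, Matrix.SpecialLinearGroup.coe_pow,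
    Matrix.SpecialLinearGroup.coe_inv, hA, hB, Matrix.adjugate_fin_two_of]
  norm_num [pow_succ, Matrix.mul_fin_two]

theorem levelTwelveWord_mem_GammaBar : levelTwelveWord Abar Bbar ∈ GammaBar 12 := by
  refine Subgroup.mem_map.2
    ⟨levelTwelveWord matA matB, ?_, map_levelTwelveWord projSL matA matB⟩
  rw [CongruenceSubgroup.Gamma_mem, coe_levelTwelveWord_matA_matB]
  decide

/-- For the genus-2 level-12 group `Γ = ⟨B⁶, B⁻¹A³B, A³, B²A⁻¹B, BAB, AB², B³A⟩`, the image
of `BAB³A⁻¹B⁻⁴` lies in `Γ̄(12)` but not in `Γ`; in particular `Γ̄(12) ⊄ Γ`. -/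
theorem genus_two_level_twelve_noncongruence :
    Bbar * Abar * Bbar ^ 3 * Abar⁻¹ * Bbar⁻¹ ^ 4 ∈ GammaBar 12 ∧
    Bbar * Abar * Bbar ^ 3 * Abar⁻¹ * Bbar⁻¹ ^ 4 ∉
      Subgroup.closure ({Bbar ^ 6, Bbar⁻¹ * Abar ^ 3 * Bbar, Abar ^ 3,
        Bbar ^ 2 * Abar⁻¹ * Bbar, Bbar * Abar * Bbar, Abar * Bbar ^ 2,
        Bbar ^ 3 * Abar} : Set PSL2Z) ∧
    ¬ GammaBar 12 ≤ Subgroup.closure ({Bbar ^ 6, Bbar⁻¹ * Abar ^ 3 * Bbar, Abar ^ 3,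
        Bbar ^ 2 * Abar⁻¹ * Bbar, Bbar * Abar * Bbar, Abar * Bbar ^ 2,
        Bbar ^ 3 * Abar} : Set PSL2Z) :=
  ⟨levelTwelveWord_mem_GammaBar, levelTwelveWord_notMem_closure_genusTwoGens,
    fun hle => levelTwelveWord_notMem_closure_genusTwoGens (hle levelTwelveWord_mem_GammaBar)⟩
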